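/- Under the AMS construction, if the edge basis functions Φ_E = −Ã_EE^{-1} A_EV satisfy Φ_E 1_V = 1_E, then the face basis functions Φ_F = −Ã_FF^{-1}(A_FV + A_FE Φ_E) with Ã_FF = A_FF + diag(A_FI 1_I) also satisfy the partition of unity Φ_F 1_V = 1_F. -/
import Mathlib


open scoped Matrix

/-- In the AMS construction, if the edge basis `Φ_E` satisfies
`Φ_E 1_V = 1_E`, the face rows satisfy `A_FI 1_I + A_FF 1_F + A_FE 1_E + A_FV 1_V = 0`,
and `Atil_FF = A_FF + diag(A_FI 1_I)` is invertible, then the face basis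
`Φ_F = -Atil_FF⁻¹ (A_FV + A_FE Φ_E)` also satisfies the partition of unity
`Φ_F 1_V = 1_F`. -/
theorem stmt7 {I F E V : Type*} [Fintype I] [Fintype F] [Fintype E] [Fintype V]
    [DecidableEq F]
    (AFI : Matrix F I ℝ) (AFF : Matrix F F ℝ) (AFE : Matrix F E ℝ) (AFV : Matrix F V ℝ)
    (ΦE : Matrix E V ℝ) (hE : ΦE *ᵥ (fun _ => (1 : ℝ)) = fun _ => 1)
    (hrow : AFI *ᵥ (fun _ => (1 : ℝ)) + AFF *ᵥ (fun _ => 1) + AFE *ᵥ (fun _ => 1)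
      + AFV *ᵥ (fun _ => 1) = 0)
    (hinv : IsUnit (AFF + Matrix.diagonal (AFI *ᵥ (fun _ => 1)))) :
    (-(AFF + Matrix.diagonal (AFI *ᵥ (fun _ => 1)))⁻¹ * (AFV + AFE * ΦE)) *ᵥ
        (fun _ => (1 : ℝ)) = fun _ => 1 := by
  set Atil := AFF + Matrix.diagonal (AFI *ᵥ (fun _ => 1)) with hAtil
  have hkey : (AFV + AFE * ΦE) *ᵥ (fun _ => (1 : ℝ)) = -(Atil *ᵥ (fun _ => 1)) := by
    have hdiag : Matrix.diagonal (AFI *ᵥ (fun _ => (1:ℝ))) *ᵥ (fun _ => 1)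
        = AFI *ᵥ (fun _ => 1) := by
      ext i; simp [Matrix.mulVec_diagonal]
    rw [Matrix.add_mulVec, ← Matrix.mulVec_mulVec, hE, hAtil, Matrix.add_mulVec, hdiag]
    have := hrow
    ext i
    have h2 := congrFun hrow i
    simp only [Pi.add_apply, Pi.zero_apply] at h2
    simp only [Pi.add_apply, Pi.neg_apply]
    linarith
  rw [Matrix.neg_mul, Matrix.neg_mulVec, ← Matrix.mulVec_mulVec, hkey,
    Matrix.mulVec_neg, neg_neg, Matrix.mulVec_mulVec,
    Matrix.nonsing_inv_mul _ ((Matrix.isUnit_iff_isUnit_det _).mp hinv), Matrix.one_mulVec]
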